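/- Every factor ω of the period-doubling sequence D occurs exactly once in its envelope Env(ω); that is, there is exactly one position at which ω occurs in the word Env(ω). -/

import Mathlib

/-- The alphabet: letters a, b (for the period-doubling sequence) and c (used by Θ₂). -/
inductive Letter : Type
  | a | b | c
deriving DecidableEq, Repr

open Letter

/-- The period-doubling substitution σ : a ↦ ab, b ↦ aa, extended to words
(the extra letter c is left untouched; it is never produced). -/
def sigmaw : List Letter → List Letter :=
  fun w => w.flatMap fun x => match x with
    | .a => [.a, .b]
    | .b => [.a, .a]
    | .c => [.c]

/-- A_m = σ^m(a). -/
def A (m : ℕ) : List Letter := sigmaw^[m] [.a]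

/-- B_m = σ^m(b). -/
def B (m : ℕ) : List Letter := sigmaw^[m] [.b]

/-- δ_m, the last letter of A_m. -/
def delta (m : ℕ) : Letter := (A m).getLastD .a

/-- The period-doubling sequence D, as a function giving its (n+1)-st letter
(0-indexed); it is the fixed point of σ beginning with a, and A_{n+1} is a
prefix of it of length 2^{n+1} > n. -/
def D (n : ℕ) : Letter := (A (n + 1)).getD n .a

/-- The finite segment D[i .. i+len−1] of the period-doubling sequence,
with 1-based starting position i. -/
def Dseg (i len : ℕ) : List Letter := (List.range len).map fun k => D (i - 1 + k)

/-- u occurs in the finite word w at (1-based) position i. -/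
def OccursAt {α : Type*} (u w : List α) (i : ℕ) : Prop :=
  1 ≤ i ∧ i - 1 + u.length ≤ w.length ∧ (w.drop (i - 1)).take u.length = u

/-- u is a factor of the finite word w. -/
def IsFactor {α : Type*} (u w : List α) : Prop := ∃ i, OccursAt u w i

/-- u occurs in the period-doubling sequence D at (1-based) position i. -/
def DOccursAt (u : List Letter) (i : ℕ) : Prop := 1 ≤ i ∧ Dseg i u.length = u

/-- u is a factor of the period-doubling sequence D. -/
def FactorD (u : List Letter) : Prop := ∃ i, DOccursAt u i

/-- L(u,p): the starting position of the p-th occurrence (p ≥ 1) of u in D. -/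
noncomputable def L (u : List Letter) (p : ℕ) : ℕ := Nat.nth (DOccursAt u) (p - 1)

/-- r_p(u): the p-th return word of u (p ≥ 1), i.e. D[L(u,p) .. L(u,p+1)−1];
r_0(u) is the prefix of D preceding the first occurrence of u. -/
noncomputable def r (u : List Letter) (p : ℕ) : List Letter :=
  if p = 0 then Dseg 1 (L u 1 - 1) else Dseg (L u p) (L u (p + 1) - L u p)

/-- The morphism τ₁ : a ↦ a, b ↦ bb, extended to words. -/
def tau1 : List Letter → List Letter :=
  fun w => w.flatMap fun x => match x with
    | .a => [.a]
    | .b => [.b, .b]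
    | .c => [.c]

/-- The morphism τ₂ : a ↦ ab, b ↦ acac, extended to words. -/
def tau2 : List Letter → List Letter :=
  fun w => w.flatMap fun x => match x with
    | .a => [.a, .b]
    | .b => [.a, .c, .a, .c]
    | .c => [.c]

/-- Θ₁[p], the p-th letter (p ≥ 1) of Θ₁ = τ₁(D): since |τ₁(w)| ≥ |w|, the p-th
letter of Θ₁ is the p-th letter of the image of the length-p prefix of D. -/
def Theta1 (p : ℕ) : Letter := (tau1 (Dseg 1 p)).getD (p - 1) .a

/-- Θ₂[p], the p-th letter (p ≥ 1) of Θ₂ = τ₂(D). -/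
def Theta2 (p : ℕ) : Letter := (tau2 (Dseg 1 p)).getD (p - 1) .a

/-- The envelope word E_{1,m} = A_m with its last letter δ_m deleted. -/
def E1 (m : ℕ) : List Letter := (A m).dropLast

/-- The envelope word E_{2,m} = B_m B_{m−1} with its last letter δ_m deleted. -/
def E2 (m : ℕ) : List Letter := (B m ++ B (m - 1)).dropLast

/-- Enumeration of the envelope words in the order
E_{1,1} ⊏ E_{2,1} ⊏ E_{1,2} ⊏ E_{2,2} ⊏ …. -/
def Eword (k : ℕ) : List Letter := if k % 2 = 0 then E1 (k / 2 + 1) else E2 (k / 2 + 1)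

/-- Env(u): the ⊏-least envelope word having u as a factor. -/
noncomputable def Env (u : List Letter) : List Letter :=
  Eword (sInf {k | IsFactor u (Eword k)})

/-- The letterwise complement exchanging a and b. -/
def comp : Letter → Letter
  | .a => .b
  | .b => .a
  | .c => .c

/-!
Write `sigmaA w = σ(w)a`. Deleting the last letter commutes with `σ` up to this extra `a`, so the
envelope words satisfy `E_{i,m+1} = sigmaA E_{i,m}`, starting from `a` and `aa`. In `σ(w)a` the
even positions carry `a` and position `2t+1` carries the complement of `w[t]`. For an envelope
word `w` (which has no `b` at an even position) this puts every letter `b` of `ω` at an odd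
position and makes every occurrence of `aaa` start at an even one, so two occurrences in `σ(w)a`
of any `ω` other than `a`, `aa` have the same parity. Extended by one `a` to the left when odd,
they start at even positions, and since `σ` is injective they come from two occurrences of a
single nonempty `u` in `w`. By induction on the envelope index, `u` is a factor of an earlier
envelope word `w'`, hence `ω` is a factor of `σ(w')a`, which still comes before `σ(w)a`.
Minimality of `Env(ω)` thus rules out a second occurrence.
-/

theorem occursAt_iff_prefix_drop {α : Type*} {u w : List α} (hu : u ≠ []) {i : ℕ} :
    OccursAt u w i ↔ 1 ≤ i ∧ u <+: w.drop (i - 1) := by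
  rw [OccursAt, List.prefix_iff_eq_take]
  constructor
  · rintro ⟨hi, -, h⟩
    exact ⟨hi, h.symm⟩
  · rintro ⟨hi, h⟩
    refine ⟨hi, ?_, h.symm⟩
    have hlen := (List.prefix_iff_eq_take.mpr h).length_le
    have := List.length_pos_iff.mpr hu
    rw [List.length_drop] at hlen
    omega

theorem List.infix_iff_exists_prefix_drop {α : Type*} {u w : List α} :
    u <:+: w ↔ ∃ p, u <+: w.drop p := by
  rw [List.infix_iff_prefix_suffix]
  constructor
  · rintro ⟨t, hu, ht⟩
    exact ⟨_, List.suffix_iff_eq_drop.mp ht ▸ hu⟩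
  · rintro ⟨p, hp⟩
    exact ⟨_, hp, List.drop_suffix p w⟩

theorem isFactor_iff_infix {α : Type*} {u w : List α} (hu : u ≠ []) :
    IsFactor u w ↔ u <:+: w := by
  rw [List.infix_iff_exists_prefix_drop]
  constructor
  · rintro ⟨i, hi⟩
    exact ⟨_, ((occursAt_iff_prefix_drop hu).mp hi).2⟩
  · rintro ⟨p, hp⟩
    exact ⟨p + 1, (occursAt_iff_prefix_drop hu).mpr ⟨by omega, hp⟩⟩

section

variable {u v w x y ω : List Letter} {p q : ℕ}

theorem sigmaw_append (u v : List Letter) : sigmaw (u ++ v) = sigmaw u ++ sigmaw v := by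
  simp [sigmaw]

theorem sigmaw_cons (x : Letter) (w : List Letter) : sigmaw (x :: w) = sigmaw [x] ++ sigmaw w :=
  sigmaw_append [x] w

theorem sigmaw_singleton {x : Letter} (hx : x ≠ c) : sigmaw [x] = [a, comp x] := by
  cases x <;> simp_all [sigmaw, comp]

theorem sigmaw_injective : Function.Injective sigmaw := by
  intro u v h
  induction u generalizing v with
  | nil => cases v with
    | nil => rfl
    | cons y v => cases y <;> simp [sigmaw] at h
  | cons x u ih => cases v with
    | nil => cases x <;> simp [sigmaw] at h
    | cons y v =>
      rw [sigmaw_cons, sigmaw_cons x] at h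
      cases x <;> cases y <;> simp [sigmaw] at h ⊢ <;> exact ih h

theorem sigmaw_prefix_sigmaw (h : u <+: v) : sigmaw u <+: sigmaw v := by
  obtain ⟨t, rfl⟩ := h
  rw [sigmaw_append]
  exact List.prefix_append _ _

theorem c_not_mem_sigmaw (hw : c ∉ w) : c ∉ sigmaw w := by
  simp only [sigmaw, List.mem_flatMap, not_exists, not_and]
  intro x hx
  cases x <;> simp_all

theorem length_sigmaw (hw : c ∉ w) : (sigmaw w).length = 2 * w.length := by
  induction w with
  | nil => rfl
  | cons x w ih =>
    rw [List.mem_cons, not_or] at hw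
    rw [sigmaw_cons, List.length_append, sigmaw_singleton (Ne.symm hw.1), ih hw.2]
    simp only [List.length_cons, List.length_nil]
    ring

theorem sigmaw_take (hw : c ∉ w) (n : ℕ) :
    sigmaw (w.take n) = (sigmaw w).take (2 * n) := by
  induction w generalizing n with
  | nil => simp [sigmaw]
  | cons x w ih =>
    rw [List.mem_cons, not_or] at hw
    cases n with
    | zero => simp [sigmaw]
    | succ n =>
      rw [List.take_succ_cons, sigmaw_cons x (w.take n), sigmaw_cons x w, ih hw.2,
        sigmaw_singleton (Ne.symm hw.1), show 2 * (n + 1) = 2 * n + 1 + 1 by ring]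
      rfl

theorem sigmaw_drop (hw : c ∉ w) (n : ℕ) :
    sigmaw (w.drop n) = (sigmaw w).drop (2 * n) := by
  induction w generalizing n with
  | nil => simp [sigmaw]
  | cons x w ih =>
    rw [List.mem_cons, not_or] at hw
    cases n with
    | zero => simp
    | succ n =>
      rw [List.drop_succ_cons, sigmaw_cons x, ih hw.2, sigmaw_singleton (Ne.symm hw.1),
        show 2 * (n + 1) = 2 * n + 1 + 1 by ring]
      rfl

def sigmaA (w : List Letter) : List Letter := sigmaw w ++ [a]

theorem sigmaA_append (u v : List Letter) : sigmaA (u ++ v) = sigmaw u ++ sigmaA v := by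
  simp [sigmaA, sigmaw_append]

theorem sigmaA_cons {x : Letter} (hx : x ≠ c) (w : List Letter) :
    sigmaA (x :: w) = a :: comp x :: sigmaA w := by
  rw [← List.singleton_append, sigmaA_append, sigmaw_singleton hx]
  rfl

theorem c_not_mem_sigmaA (hw : c ∉ w) : c ∉ sigmaA w := by
  simpa [sigmaA] using c_not_mem_sigmaw hw

theorem length_sigmaA (hw : c ∉ w) : (sigmaA w).length = 2 * w.length + 1 := by
  simp [sigmaA, length_sigmaw hw]

theorem sigmaA_drop (hw : c ∉ w) {j : ℕ} (hj : j ≤ w.length) :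
    (sigmaA w).drop (2 * j) = sigmaA (w.drop j) := by
  rw [sigmaA, sigmaA, List.drop_append_of_le_length (by rw [length_sigmaw hw]; omega),
    sigmaw_drop hw]

theorem getElem?_sigmaA_two_mul (hw : c ∉ w) {t : ℕ} (ht : t ≤ w.length) :
    (sigmaA w)[2 * t]? = some a := by
  rw [← add_zero (2 * t), ← List.getElem?_drop, sigmaA_drop hw ht]
  cases h : w.drop t with
  | nil => rfl
  | cons x v =>
    rw [sigmaA_cons (fun hx => hw (List.mem_of_mem_drop (hx ▸ h ▸ List.mem_cons_self)))]
    rfl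

theorem getElem?_sigmaA_two_mul_ne_b (hw : c ∉ w) (t : ℕ) :
    (sigmaA w)[2 * t]? ≠ some b := by
  rcases le_or_gt t w.length with ht | ht
  · simp [getElem?_sigmaA_two_mul hw ht]
  · rw [List.getElem?_eq_none (by rw [length_sigmaA hw]; omega)]
    simp

theorem getElem?_sigmaA_two_mul_add_one (hw : c ∉ w) (t : ℕ) :
    (sigmaA w)[2 * t + 1]? = w[t]?.map comp := by
  induction w generalizing t with
  | nil => simp [sigmaA, sigmaw]
  | cons x w ih =>
    rw [List.mem_cons, not_or] at hw
    rw [sigmaA_cons (Ne.symm hw.1)]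
    cases t with
    | zero => rfl
    | succ t => simpa [Nat.mul_succ] using ih hw.2 t

theorem singleton_a_prefix_sigmaA (hw : c ∉ w) : [a] <+: sigmaA w := by
  rw [List.prefix_iff_getElem?]
  intro i hi
  simpa [show i = 0 by simpa using hi] using getElem?_sigmaA_two_mul hw (Nat.zero_le _)

theorem sigmaA_prefix_sigmaA (hw : c ∉ w) (h : u <+: w) :
    sigmaA u <+: sigmaA w := by
  obtain ⟨v, rfl⟩ := h
  rw [sigmaA_append, sigmaA, List.prefix_append_right_inj]
  exact singleton_a_prefix_sigmaA fun hv => hw (List.mem_append_right u hv)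

theorem sigmaA_infix_sigmaA (hw : c ∉ w) (h : u <:+: w) :
    sigmaA u <:+: sigmaA w := by
  obtain ⟨s, t, rfl⟩ := h
  rw [List.append_assoc, sigmaA_append]
  exact (sigmaA_prefix_sigmaA (fun h => hw (by simp [h]))
    (List.prefix_append u t)).isInfix.trans (List.suffix_append _ _).isInfix

theorem sigmaw_dropLast (hw : c ∉ w) (hne : w ≠ []) :
    (sigmaw w).dropLast = sigmaA w.dropLast := by
  conv_lhs => rw [← List.dropLast_append_getLast hne]
  rw [sigmaw_append, sigmaw_singleton fun h => hw (h ▸ List.getLast_mem hne),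
    List.dropLast_append_of_ne_nil (by simp)]
  rfl

theorem A_succ (m : ℕ) : A (m + 1) = sigmaw (A m) := Function.iterate_succ_apply' _ _ _

theorem B_succ (m : ℕ) : B (m + 1) = sigmaw (B m) := Function.iterate_succ_apply' _ _ _

theorem c_not_mem_A (m : ℕ) : c ∉ A m := by
  induction m with
  | zero => decide
  | succ m ih => exact A_succ m ▸ c_not_mem_sigmaw ih

theorem c_not_mem_B (m : ℕ) : c ∉ B m := by
  induction m with
  | zero => decide
  | succ m ih => exact B_succ m ▸ c_not_mem_sigmaw ih

theorem length_A (m : ℕ) : (A m).length = 2 ^ m := by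
  induction m with
  | zero => rfl
  | succ m ih => rw [A_succ, length_sigmaw (c_not_mem_A m), ih, pow_succ, mul_comm]

theorem length_B (m : ℕ) : (B m).length = 2 ^ m := by
  induction m with
  | zero => rfl
  | succ m ih => rw [B_succ, length_sigmaw (c_not_mem_B m), ih, pow_succ, mul_comm]

theorem A_prefix_A_succ (m : ℕ) : A m <+: A (m + 1) := by
  induction m with
  | zero => exact ⟨[b], rfl⟩
  | succ m ih => rw [A_succ, A_succ (m + 1)]; exact sigmaw_prefix_sigmaw ih

theorem A_prefix_A_of_le {m n : ℕ} (h : m ≤ n) : A m <+: A n := by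
  induction n, h using Nat.le_induction with
  | base => exact List.prefix_refl _
  | succ n _ ih => exact ih.trans (A_prefix_A_succ n)

theorem getElem?_A {m n : ℕ} (h : n < 2 ^ m) : (A m)[n]? = some (D n) := by
  have hm : n < (A m).length := length_A m ▸ h
  have hn : n < (A (n + 1)).length := length_A (n + 1) ▸ Nat.lt_two_pow_self.trans
    (Nat.pow_lt_pow_succ one_lt_two)
  have h₁ := List.prefix_iff_getElem?.mp (A_prefix_A_of_le (le_max_left m (n + 1))) n hm
  have h₂ := List.prefix_iff_getElem?.mp (A_prefix_A_of_le (le_max_right m (n + 1))) n hn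
  rw [D, List.getD_eq_getElem _ _ hn, ← h₂, h₁, List.getElem?_eq_getElem hm]

theorem E1_succ (m : ℕ) : E1 (m + 1) = sigmaA (E1 m) := by
  rw [E1, E1, A_succ, sigmaw_dropLast (c_not_mem_A m)]
  exact List.ne_nil_of_length_pos (by rw [length_A]; positivity)

theorem E2_succ (m : ℕ) : E2 (m + 2) = sigmaA (E2 (m + 1)) := by
  have hne : B (m + 1) ++ B m ≠ [] := by
    simp [← List.length_eq_zero_iff, length_B]
  rw [E2, E2, Nat.add_sub_cancel, show m + 2 - 1 = m + 1 by omega,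
    show B (m + 2) ++ B (m + 1) = sigmaw (B (m + 1) ++ B m) by
      rw [sigmaw_append, ← B_succ, ← B_succ],
    sigmaw_dropLast (by simp [c_not_mem_B]) hne]

theorem Eword_add_two (k : ℕ) : Eword (k + 2) = sigmaA (Eword k) := by
  rw [Eword, Eword, Nat.add_mod_right, show (k + 2) / 2 + 1 = k / 2 + 1 + 1 by omega]
  split_ifs
  · exact E1_succ _
  · exact E2_succ _

theorem c_not_mem_Eword (k : ℕ) : c ∉ Eword k := by
  rw [Eword]
  split_ifs
  · exact fun h => c_not_mem_A _ (List.dropLast_subset _ h)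
  · exact fun h => by simpa [c_not_mem_B] using List.dropLast_subset _ h

theorem getElem?_Eword_two_mul_ne_b (k t : ℕ) : (Eword k)[2 * t]? ≠ some b := by
  match k with
  | 0 | 1 => exact fun h => absurd (List.mem_of_getElem? h) (by decide)
  | k + 2 => exact Eword_add_two k ▸ getElem?_sigmaA_two_mul_ne_b (c_not_mem_Eword k) t

theorem exists_infix_Eword (h : FactorD ω) : ∃ k, ω <:+: Eword k := by
  obtain ⟨i, -, hseg⟩ := h
  refine ⟨2 * (i - 1 + ω.length), List.infix_iff_exists_prefix_drop.mpr ⟨i - 1, ?_⟩⟩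
  rw [Eword, if_pos (by omega),
    show 2 * (i - 1 + ω.length) / 2 + 1 = i - 1 + ω.length + 1 by omega, E1,
    List.prefix_iff_getElem?]
  intro t ht
  have hlt : i - 1 + t < 2 ^ (i - 1 + ω.length + 1) - 1 := by
    have := Nat.lt_two_pow_self (n := i - 1 + ω.length + 1)
    omega
  rw [List.getElem?_drop, List.getElem?_dropLast, length_A, if_pos hlt,
    getElem?_A (by omega)]
  conv_rhs => rw [List.getElem_of_eq hseg.symm ht]
  simp [Dseg]

theorem odd_of_prefix_drop_sigmaA (hw : c ∉ w) (h : ω <+: (sigmaA w).drop p) {t : ℕ}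
    (ht : t < ω.length) (hb : ω[t] = b) : (p + t) % 2 = 1 := by
  have hpt : (sigmaA w)[p + t]? = some b := by
    rw [← List.getElem?_drop, List.prefix_iff_getElem?.mp h t ht, hb]
  by_contra hodd
  exact getElem?_sigmaA_two_mul_ne_b hw ((p + t) / 2) (by rwa [Nat.two_mul_div_two_of_even
    (Nat.even_iff.mpr (by omega))])

theorem getElem?_eq_b_of_sigmaA_eq_a (hw : c ∉ w) {s : ℕ}
    (h : (sigmaA w)[2 * s + 1]? = some a) : w[s]? = some b := by
  rw [getElem?_sigmaA_two_mul_add_one hw, Option.map_eq_some_iff] at h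
  obtain ⟨x, hx, hxa⟩ := h
  cases x
  · exact absurd hxa (by decide)
  · exact hx
  · exact absurd (List.mem_of_getElem? hx) hw

theorem even_of_aaa_prefix_drop_sigmaA (hw : c ∉ w) (hw₂ : ∀ t, w[2 * t]? ≠ some b)
    (h : [a, a, a] <+: (sigmaA w).drop p) : p % 2 = 0 := by
  by_contra hp
  obtain ⟨s, rfl⟩ : ∃ s, p = 2 * s + 1 := ⟨p / 2, by omega⟩
  have hocc := List.prefix_iff_getElem?.mp h
  simp only [List.getElem?_drop] at hocc
  have h₀ := getElem?_eq_b_of_sigmaA_eq_a hw (hocc 0 (by simp))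
  have h₂ := getElem?_eq_b_of_sigmaA_eq_a (s := s + 1) hw (hocc 2 (by simp))
  rcases Nat.even_or_odd s with ⟨r, hr⟩ | ⟨r, hr⟩
  · exact hw₂ r (by rw [← two_mul] at hr; rwa [← hr])
  · exact hw₂ (r + 1) (by rwa [show 2 * (r + 1) = s + 1 by omega])

theorem cons_a_prefix_drop_sigmaA (hw : c ∉ w) (hω : ω ≠ []) {s : ℕ}
    (h : ω <+: (sigmaA w).drop (2 * s + 1)) : a :: ω <+: (sigmaA w).drop (2 * s) := by
  have hlt : 2 * s < (sigmaA w).length := by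
    have hlen := h.length_le
    have := List.length_pos_iff.mpr hω
    rw [List.length_drop] at hlen
    omega
  rw [List.drop_eq_getElem_cons hlt, List.cons_prefix_cons]
  refine ⟨?_, h⟩
  have := getElem?_sigmaA_two_mul hw (t := s) (by rw [length_sigmaA hw] at hlt; omega)
  rw [List.getElem?_eq_getElem hlt] at this
  exact (Option.some_inj.mp this).symm

theorem exists_index_odd_of_prefix_drop_sigmaA (hw : c ∉ w) (hw₂ : ∀ t, w[2 * t]? ≠ some b)
    (hω : ¬ ω <:+: List.replicate 2 a) (hp : ω <+: (sigmaA w).drop p) :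
    ∃ t < ω.length, ∀ q, ω <+: (sigmaA w).drop q → (q + t) % 2 = 1 := by
  by_cases hb : b ∈ ω
  · obtain ⟨t, ht, hbt⟩ := List.mem_iff_getElem.mp hb
    exact ⟨t, ht, fun q hq => odd_of_prefix_drop_sigmaA hw hq ht hbt⟩
  have hall : ω = List.replicate ω.length a := by
    refine List.eq_replicate_iff.mpr ⟨rfl, fun x hx => ?_⟩
    have hxc : x ≠ c := fun h => c_not_mem_sigmaA hw (h ▸ List.mem_of_mem_drop (hp.mem hx))
    cases x <;> simp_all
  have h3 : 3 ≤ ω.length := by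
    by_contra h
    exact hω (List.infix_replicate_iff.mpr ⟨by omega, hall⟩)
  have hpre : [a, a, a] <+: ω := by
    rw [hall]
    exact List.prefix_replicate_iff.mpr ⟨h3, rfl⟩
  refine ⟨1, by omega, fun q hq => ?_⟩
  have := even_of_aaa_prefix_drop_sigmaA hw hw₂ (hpre.trans hq)
  omega

theorem exists_prefix_sigmaA_of_prefix_sigmaA (hx : c ∉ x) (hy : c ∉ y)
    (hωx : ω <+: sigmaA x) (hωy : ω <+: sigmaA y) :
    ∃ u, u.length = ω.length / 2 ∧ u <+: x ∧ u <+: y ∧ ω <+: sigmaA u := by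
  set n := ω.length / 2
  have hlen : ∀ {z}, c ∉ z → ω <+: sigmaA z → n ≤ z.length := fun hz h => by
    have := h.length_le
    rw [length_sigmaA hz] at this
    omega
  have htake : ∀ {z}, c ∉ z → ω <+: sigmaA z → sigmaw (z.take n) = ω.take (2 * n) := by
    intro z hz h
    have := hlen hz h
    rw [sigmaw_take hz, List.prefix_iff_eq_take.mp h, List.take_take, sigmaA,
      List.take_append_of_le_length (by rw [length_sigmaw hz]; omega), min_eq_left (by omega)]
  have hxy : x.take n = y.take n := sigmaw_injective ((htake hx hωx).trans (htake hy hωy).symm)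
  refine ⟨x.take n, by simp [hlen hx hωx], List.take_prefix _ _, hxy ▸ List.take_prefix _ _,
    ?_⟩
  refine List.prefix_of_prefix_length_le hωx (sigmaA_prefix_sigmaA hx (List.take_prefix _ _)) ?_
  rw [length_sigmaA fun h => hx (List.mem_of_mem_take h), List.length_take,
    min_eq_left (hlen hx hωx)]
  omega

theorem replicate_append_prefix_sigmaA_drop (hw : c ∉ w) (hω : ω ≠ [])
    (h : ω <+: (sigmaA w).drop p) :
    List.replicate (p % 2) a ++ ω <+: sigmaA (w.drop (p / 2)) := by
  have hlen := h.length_le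
  have := List.length_pos_iff.mpr hω
  rw [List.length_drop, length_sigmaA hw] at hlen
  rw [← sigmaA_drop hw (by omega)]
  rcases Nat.mod_two_eq_zero_or_one p with hp | hp
  · rwa [hp, show 2 * (p / 2) = p by omega]
  · rw [hp]
    exact cons_a_prefix_drop_sigmaA hw hω (by rwa [show 2 * (p / 2) + 1 = p by omega])

theorem exists_desubstituted_occurrences (hw : c ∉ w) (hw₂ : ∀ t, w[2 * t]? ≠ some b)
    (hω : ¬ ω <:+: List.replicate 2 a) (hpq : p ≠ q) (hp : ω <+: (sigmaA w).drop p)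
    (hq : ω <+: (sigmaA w).drop q) :
    ∃ u ≠ [], ω <:+: sigmaA u ∧ ∃ i j, i ≠ j ∧ u <+: w.drop i ∧ u <+: w.drop j := by
  obtain ⟨t, ht, hodd⟩ := exists_index_odd_of_prefix_drop_sigmaA hw hw₂ hω hp
  have hpodd := hodd p hp
  have hqodd := hodd q hq
  have hne : ω ≠ [] := by
    rintro rfl
    exact hω List.nil_infix
  have hp' := replicate_append_prefix_sigmaA_drop hw hne hp
  have hq' := replicate_append_prefix_sigmaA_drop hw hne hq
  rw [show q % 2 = p % 2 by omega] at hq'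
  have hwd : ∀ i, c ∉ w.drop i := fun _ h => hw (List.mem_of_mem_drop h)
  obtain ⟨u, hu, hup, huq, hu'⟩ := exists_prefix_sigmaA_of_prefix_sigmaA (hwd _) (hwd _) hp' hq'
  have hulen : 0 < u.length := by
    rw [hu, List.length_append, List.length_replicate]
    have := List.length_pos_iff.mpr hne
    omega
  exact ⟨u, List.ne_nil_of_length_pos hulen, (List.suffix_append _ _).isInfix.trans hu'.isInfix,
    p / 2, q / 2, by omega, hup, huq⟩

theorem exists_lt_infix_Eword_of_two_occurrences (k : ℕ) (hω : ω ≠ []) (hpq : p ≠ q)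
    (hp : ω <+: (Eword k).drop p) (hq : ω <+: (Eword k).drop q) :
    ∃ k' < k, ω <:+: Eword k' := by
  induction k using Nat.strong_induction_on generalizing ω p q with
  | _ k ih =>
  have hlen := List.length_pos_iff.mpr hω
  have hp' := hp.length_le
  have hq' := hq.length_le
  rw [List.length_drop] at hp' hq'
  match k with
  | 0 =>
    have hE : (Eword 0).length = 1 := rfl
    omega
  | 1 =>
    have hE : Eword 1 = [a, a] := rfl
    rw [hE, List.length_cons, List.length_singleton] at hp' hq'
    obtain ⟨x, rfl⟩ := List.length_eq_one_iff.mp (show ω.length = 1 by omega)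
    obtain rfl : x = a := by simpa [hE] using List.mem_of_mem_drop (hp.mem List.mem_cons_self)
    exact ⟨0, one_pos, List.infix_refl _⟩
  | k + 2 =>
    by_cases hsmall : ω <:+: Eword 1
    · exact ⟨1, by omega, hsmall⟩
    rw [Eword_add_two] at hp hq
    obtain ⟨u, hu, hωu, i, j, hij, hi, hj⟩ := exists_desubstituted_occurrences
      (c_not_mem_Eword k) (getElem?_Eword_two_mul_ne_b k) hsmall hpq hp hq
    obtain ⟨k', hk', hu'⟩ := ih k (by omega) hu hij hi hj
    exact ⟨k' + 2, by omega,
      hωu.trans (Eword_add_two k' ▸ sigmaA_infix_sigmaA (c_not_mem_Eword k') hu')⟩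

end

/-- Every (nonempty) factor ω of the period-doubling sequence D occurs
exactly once in its envelope Env(ω). -/
theorem factor_occurs_once_in_envelope (ω : List Letter) (hfac : FactorD ω)
    (hne : ω ≠ []) :
    ∃! i, OccursAt ω (Env ω) i := by
  have hS : {k | IsFactor ω (Eword k)}.Nonempty :=
    (exists_infix_Eword hfac).imp fun _ => (isFactor_iff_infix hne).mpr
  obtain ⟨i, hi⟩ := Nat.sInf_mem hS
  refine ⟨i, hi, fun j hj => ?_⟩
  obtain ⟨hi₁, hi'⟩ := (occursAt_iff_prefix_drop hne).mp hi
  obtain ⟨hj₁, hj'⟩ := (occursAt_iff_prefix_drop hne).mp hj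
  by_contra hji
  obtain ⟨k', hk', hk'S⟩ :=
    exists_lt_infix_Eword_of_two_occurrences _ hne (by omega : j - 1 ≠ i - 1) hj' hi'
  exact (Nat.sInf_le ((isFactor_iff_infix hne).mpr hk'S)).not_gt hk'
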